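/- Let A ∈ ℝ^{m×n}, let Q ∈ ℝ^{m×k} and P ∈ ℝ^{n×k} have orthonormal columns with orthonormal complements Q_⊥, P_⊥, and let Φ ∈ ℝ^{s×m}, Ψ ∈ ℝ^{s×n}. Set Φ₁ = ΦQ, Φ₂ = ΦQ_⊥, Ψ₁ = ΨP, Ψ₂ = ΨP_⊥, and suppose Φ₁ and Ψ₁ have full column rank k. Define C := Φ₁† (Φ A Ψᵀ) (Ψ₁†)ᵀ. Then C − Qᵀ A P = Φ₁† Φ₂ (Q_⊥ᵀ A P) + (Qᵀ A P_⊥) Ψ₂ᵀ (Ψ₁†)ᵀ + Φ₁† Φ₂ (Q_⊥ᵀ A P_⊥) Ψ₂ᵀ (Ψ₁†)ᵀ. -/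

import Mathlib

/-!
Full column rank makes the Gram matrix `Φ₁ᵀΦ₁` invertible, so `(Φ₁ᵀΦ₁)⁻¹Φ₁ᵀ` satisfies the
Penrose conditions; hence `pinv Φ₁` is the chosen solution, and the first condition
`Φ₁ Φ₁† Φ₁ = Φ₁` together with a left inverse of `Φ₁` forces `Φ₁† Φ₁ = 1`. Splitting
`Φ = Φ (Q Qᵀ + Q_⊥ Q_⊥ᵀ)` then gives `Φ₁† Φ = Qᵀ + Φ₁† Φ₂ Q_⊥ᵀ`, likewise
`Ψ₁† Ψ = Pᵀ + Ψ₁† Ψ₂ P_⊥ᵀ`, and expanding `C = (Φ₁† Φ) A (Ψ₁† Ψ)ᵀ` yields `Qᵀ A P` plus the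
three error terms.
-/

open Matrix Classical

/-- The Moore–Penrose pseudoinverse of a real matrix, defined via the four
Penrose conditions (which characterize it uniquely). -/
noncomputable def pinv {m n : ℕ} (A : Matrix (Fin m) (Fin n) ℝ) : Matrix (Fin n) (Fin m) ℝ :=
  if h : ∃ B : Matrix (Fin n) (Fin m) ℝ,
      A * B * A = A ∧ B * A * B = B ∧ (A * B)ᵀ = A * B ∧ (B * A)ᵀ = B * A
  then h.choose else 0

namespace Matrix

variable {k m n p q s α : Type*} [Fintype k] [Fintype m] [Fintype n] [Fintype p] [Fintype q]
  [Fintype s]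

theorem isUnit_transpose_mul_self_of_rank_eq [Field α] [LinearOrder α] [IsStrictOrderedRing α]
    [DecidableEq n] (A : Matrix m n α) (h : A.rank = Fintype.card n) : IsUnit (Aᵀ * A) := by
  rw [← mulVec_surjective_iff_isUnit]
  refine (LinearMap.range_eq_top (f := (Aᵀ * A).mulVecLin)).mp (Submodule.eq_top_of_finrank_eq ?_)
  rw [Module.finrank_fintype_fun_eq_card, ← h, ← rank_transpose_mul_self]
  rfl

section Semiring

variable [Semiring α]

theorem mul_eq_one_of_mul_eq_one_of_mul_mul_eq_self [DecidableEq n] {L : Matrix n m α}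
    {A : Matrix m n α} {B : Matrix n m α} (hL : L * A = 1) (hB : A * B * A = A) : B * A = 1 :=
  calc B * A = L * A * (B * A) := by rw [hL, Matrix.one_mul]
    _ = L * (A * B * A) := by simp only [Matrix.mul_assoc]
    _ = 1 := by rw [hB, hL]

theorem mul_eq_transpose_add_of_mul_mul_eq_one [DecidableEq k] [DecidableEq m]
    {L : Matrix k s α} {Φ : Matrix s m α} {Q : Matrix m k α} {Qp : Matrix m p α}
    (hL : L * (Φ * Q) = 1) (hQc : Q * Qᵀ + Qp * Qpᵀ = 1) :
    L * Φ = Qᵀ + L * (Φ * Qp) * Qpᵀ :=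
  calc L * Φ = L * Φ * (Q * Qᵀ + Qp * Qpᵀ) := by rw [hQc, Matrix.mul_one]
    _ = L * (Φ * Q) * Qᵀ + L * (Φ * Qp) * Qpᵀ := by simp only [Matrix.mul_add, Matrix.mul_assoc]
    _ = Qᵀ + L * (Φ * Qp) * Qpᵀ := by rw [hL, Matrix.one_mul]

end Semiring

section CommRing

variable [CommRing α]

theorem nonsing_inv_transpose_mul_self_mul_transpose_mul_self [DecidableEq n] (A : Matrix m n α)
    (h : IsUnit (Aᵀ * A)) : (Aᵀ * A)⁻¹ * Aᵀ * A = 1 := by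
  rw [Matrix.mul_assoc, nonsing_inv_mul _ ((isUnit_iff_isUnit_det _).mp h)]

theorem exists_penrose_inverse_of_isUnit_transpose_mul_self [DecidableEq n] (A : Matrix m n α)
    (h : IsUnit (Aᵀ * A)) : ∃ B : Matrix n m α,
      A * B * A = A ∧ B * A * B = B ∧ (A * B)ᵀ = A * B ∧ (B * A)ᵀ = B * A := by
  have hL := nonsing_inv_transpose_mul_self_mul_transpose_mul_self A h
  refine ⟨(Aᵀ * A)⁻¹ * Aᵀ, ?_, ?_, ?_, ?_⟩
  · rw [Matrix.mul_assoc, hL, Matrix.mul_one]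
  · rw [hL, Matrix.one_mul]
  · rw [transpose_mul, transpose_mul, transpose_nonsing_inv, transpose_mul, transpose_transpose,
      Matrix.mul_assoc]
  · rw [hL, transpose_one]

theorem mul_mul_transpose_sub_transpose_mul_mul_eq [DecidableEq k] [DecidableEq m]
    [DecidableEq n] {A : Matrix m n α}
    {Φ : Matrix s m α} {Q : Matrix m k α} {Qp : Matrix m p α} {L : Matrix k s α}
    {Ψ : Matrix s n α} {P : Matrix n k α} {Pp : Matrix n q α} {R : Matrix k s α}
    (hL : L * (Φ * Q) = 1) (hR : R * (Ψ * P) = 1)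
    (hQc : Q * Qᵀ + Qp * Qpᵀ = 1) (hPc : P * Pᵀ + Pp * Ppᵀ = 1) :
    L * (Φ * A * Ψᵀ) * Rᵀ - Qᵀ * A * P =
      L * (Φ * Qp) * (Qpᵀ * A * P) + (Qᵀ * A * Pp) * (Ψ * Pp)ᵀ * Rᵀ
        + L * (Φ * Qp) * (Qpᵀ * A * Pp) * (Ψ * Pp)ᵀ * Rᵀ := by
  calc L * (Φ * A * Ψᵀ) * Rᵀ - Qᵀ * A * P = L * Φ * A * (R * Ψ)ᵀ - Qᵀ * A * P := by
        simp only [transpose_mul, Matrix.mul_assoc]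
    _ = _ := by
        rw [mul_eq_transpose_add_of_mul_mul_eq_one hL hQc,
          mul_eq_transpose_add_of_mul_mul_eq_one hR hPc]
        simp only [transpose_add, transpose_mul, transpose_transpose, Matrix.add_mul,
          Matrix.mul_add, Matrix.mul_assoc]
        abel

end CommRing

end Matrix

theorem pinv_mul_self_of_rank_eq {m n : ℕ} (A : Matrix (Fin m) (Fin n) ℝ) (h : A.rank = n) :
    pinv A * A = 1 := by
  have hG : IsUnit (Aᵀ * A) :=
    isUnit_transpose_mul_self_of_rank_eq A (by rw [h, Fintype.card_fin])
  have hex := exists_penrose_inverse_of_isUnit_transpose_mul_self A hG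
  have hpinv : A * pinv A * A = A := by
    rw [pinv, dif_pos hex]
    exact hex.choose_spec.1
  exact mul_eq_one_of_mul_eq_one_of_mul_mul_eq_self
    (nonsing_inv_transpose_mul_self_mul_transpose_mul_self A hG) hpinv

theorem stmt5_general {m n k s : ℕ} (A : Matrix (Fin m) (Fin n) ℝ)
    (Q : Matrix (Fin m) (Fin k) ℝ) (Qp : Matrix (Fin m) (Fin (m - k)) ℝ)
    (P : Matrix (Fin n) (Fin k) ℝ) (Pp : Matrix (Fin n) (Fin (n - k)) ℝ)
    (Φ : Matrix (Fin s) (Fin m) ℝ) (Ψ : Matrix (Fin s) (Fin n) ℝ)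
    (hQc : Q * Qᵀ + Qp * Qpᵀ = 1)
    (hPc : P * Pᵀ + Pp * Ppᵀ = 1)
    (hΦrank : (Φ * Q).rank = k) (hΨrank : (Ψ * P).rank = k) :
    pinv (Φ * Q) * (Φ * A * Ψᵀ) * (pinv (Ψ * P))ᵀ - Qᵀ * A * P =
      pinv (Φ * Q) * (Φ * Qp) * (Qpᵀ * A * P)
        + (Qᵀ * A * Pp) * (Ψ * Pp)ᵀ * (pinv (Ψ * P))ᵀ
        + pinv (Φ * Q) * (Φ * Qp) * (Qpᵀ * A * Pp) * (Ψ * Pp)ᵀ * (pinv (Ψ * P))ᵀ :=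
  mul_mul_transpose_sub_transpose_mul_mul_eq (pinv_mul_self_of_rank_eq _ hΦrank)
    (pinv_mul_self_of_rank_eq _ hΨrank) hQc hPc

/-- Decomposition of the core-matrix approximation error. -/
theorem stmt5 {m n k s : ℕ} (A : Matrix (Fin m) (Fin n) ℝ)
    (Q : Matrix (Fin m) (Fin k) ℝ) (Qp : Matrix (Fin m) (Fin (m - k)) ℝ)
    (P : Matrix (Fin n) (Fin k) ℝ) (Pp : Matrix (Fin n) (Fin (n - k)) ℝ)
    (Φ : Matrix (Fin s) (Fin m) ℝ) (Ψ : Matrix (Fin s) (Fin n) ℝ)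
    (hQ : Qᵀ * Q = 1) (hQp : Qpᵀ * Qp = 1) (hQc : Q * Qᵀ + Qp * Qpᵀ = 1)
    (hP : Pᵀ * P = 1) (hPp : Ppᵀ * Pp = 1) (hPc : P * Pᵀ + Pp * Ppᵀ = 1)
    (hΦrank : (Φ * Q).rank = k) (hΨrank : (Ψ * P).rank = k) :
    pinv (Φ * Q) * (Φ * A * Ψᵀ) * (pinv (Ψ * P))ᵀ - Qᵀ * A * P =
      pinv (Φ * Q) * (Φ * Qp) * (Qpᵀ * A * P)
        + (Qᵀ * A * Pp) * (Ψ * Pp)ᵀ * (pinv (Ψ * P))ᵀ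
        + pinv (Φ * Q) * (Φ * Qp) * (Qpᵀ * A * Pp) * (Ψ * Pp)ᵀ * (pinv (Ψ * P))ᵀ :=
  stmt5_general A Q Qp P Pp Φ Ψ hQc hPc hΦrank hΨrank
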